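/- Let H0, H* ∈ H^stub_s(d) such that M(H0 Δ H*) consists of exactly one minimal alternating cycle C* containing the edges e1 = {a,b}_{H0,t}, e2 = {b,c}_{H*,t}, e3 = {c,d}_{H0,s}, e4 = {a,d}_{H0,s} and e5 = {a,f}_{H*,u} with a, b, c, d, f pairwise distinct. Then M(H0 Δ H*) does not contain the edge e6 = {f,c}_{H*,u}; i.e., the hyperarc (u,{f,c}) does not belong to A(H*) \ A(H0). -/
import Mathlib


open Finset

/-!
Common setting: fix a vertex set `V` and two tail labels `τ, σ`, encoded as
`Bool` with `true = τ` and `false = σ`.  A hyperarc is a pair `(t, {a,b})`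
consisting of a tail label and an unordered pair of vertices; it is degenerate
if `a = b`.  A hypergraph is a finite set of pairwise distinct non-degenerate
hyperarcs; `H^stub_s(d)` is the set of such hypergraphs realizing the degree
sequence `d` (stub degree of each vertex and number of hyperarcs per tail).
`M(H0 Δ H*)` is the edge-labeled multigraph whose edges record the hyperarcs
of the symmetric difference together with the hypergraph (`lab`, `true = H0`)
containing them and their tail.
-/

/-- Tail labels: `true = τ`, `false = σ`. -/
abbrev Tail := Bool

/-- A hyperarc: a tail label together with an unordered pair of vertices. -/
abbrev Hyperarc (V : Type*) := Tail × Sym2 V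

/-- A (stub) degree sequence: the stub degree of every vertex together with the
number of hyperarcs carrying each tail label. -/
structure DegreeSeq (V : Type*) where
  vdeg : V → ℕ
  tdeg : Tail → ℕ

/-- `A` is a hypergraph in `H^stub_s(d)`: a set of pairwise distinct (this is
automatic for a `Finset`) non-degenerate hyperarcs realizing the degree
sequence `D`. -/
def Realizes {V : Type*} [DecidableEq V] (A : Finset (Hyperarc V)) (D : DegreeSeq V) : Prop :=
  (∀ e ∈ A, ¬ e.2.IsDiag) ∧
  (∀ v : V, (A.filter fun e => v ∈ e.2).card = D.vdeg v) ∧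
  (∀ t : Tail, (A.filter fun e => e.1 = t).card = D.tdeg t)

/-- An edge `{a,b}_{X,t}` of the multigraph `M(H0 Δ H*)`: its label (`true`
means it comes from `H0`, `false` from `H*`), its tail `t` and its endpoints
`{a,b}`. -/
structure MEdge (V : Type*) where
  lab : Bool
  tail : Tail
  ends : Sym2 V
deriving DecidableEq

/-- `M⁻¹`: the hyperarc underlying an edge of `M(H0 Δ H*)`. -/
def MEdge.arc {V : Type*} (e : MEdge V) : Hyperarc V := (e.tail, e.ends)

/-- The edge set of the edge-labeled multigraph `M(H0 Δ H*)`: every hyperarc of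
`A(H0) \ A(H*)` becomes an edge labeled `H0` (i.e. `true`) and every hyperarc of
`A(H*) \ A(H0)` becomes an edge labeled `H*` (i.e. `false`). -/
def mEdges {V : Type*} [DecidableEq V] (A0 A1 : Finset (Hyperarc V)) : Finset (MEdge V) :=
  ((A0 \ A1).image fun h => ⟨true, h.1, h.2⟩) ∪
    ((A1 \ A0).image fun h => ⟨false, h.1, h.2⟩)

/-- An alternating cycle in the edge set `E` of `M(H0 Δ H*)`: a closed trail
(cyclic sequence of pairwise distinct edges, consecutive edges sharing an
endpoint) whose edges alternate between label `H0` and label `H*`. -/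
structure AltCycle {V : Type*} (E : Finset (MEdge V)) where
  /-- the length of the cycle -/
  n : ℕ
  two_le : 2 ≤ n
  /-- the cyclic sequence of edges -/
  edge : ℕ → MEdge V
  /-- the cyclic sequence of vertices visited -/
  vert : ℕ → V
  edge_periodic : ∀ i, edge (i + n) = edge i
  vert_periodic : ∀ i, vert (i + n) = vert i
  mem : ∀ i, edge i ∈ E
  inj : ∀ i < n, ∀ j < n, edge i = edge j → i = j
  ends_eq : ∀ i, (edge i).ends = s(vert i, vert (i + 1))
  alt : ∀ i, (edge i).lab = !(edge (i + 1)).lab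

/-- The set of edges used by an alternating cycle. -/
def AltCycle.edges {V : Type*} [DecidableEq V] {E : Finset (MEdge V)} (C : AltCycle E) :
    Finset (MEdge V) :=
  (Finset.range C.n).image C.edge

/-- A minimal alternating cycle: one containing no proper alternating subcycle. -/
def AltCycle.Minimal {V : Type*} [DecidableEq V] {E : Finset (MEdge V)} (C : AltCycle E) : Prop :=
  ∀ C' : AltCycle E, C'.edges ⊆ C.edges → C'.edges = C.edges

/-- `|f_{X,t}(M(H0 Δ H*))|`: the number of edges of `M(H0 Δ H*)` labeled with
hypergraph `l` (`true = H0`) and tail `t`. -/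
def labTailCount {V : Type*} [DecidableEq V] (A0 A1 : Finset (Hyperarc V))
    (l : Bool) (t : Tail) : ℕ :=
  ((mEdges A0 A1).filter fun e => e.lab = l ∧ e.tail = t).card

/-- `H` and `H'` differ by a single hypershuffle move, i.e. they are adjacent in
`G(H^stub_s(d))`: their symmetric difference consists of 4 hyperarcs,
`M(H Δ H')` is an alternating cycle, and the number of tail-τ edges labeled `H`
equals the number of tail-τ edges labeled `H'`. -/
def HypershuffleAdj {V : Type*} [DecidableEq V] (A0 A1 : Finset (Hyperarc V)) : Prop :=
  ((A0 \ A1) ∪ (A1 \ A0)).card = 4 ∧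
  (∃ C : AltCycle (mEdges A0 A1), C.edges = mEdges A0 A1) ∧
  labTailCount A0 A1 true true = labTailCount A0 A1 false true

namespace AltCycle
set_option linter.unusedSectionVars false

variable {V : Type*} [DecidableEq V] {E : Finset (MEdge V)} (C : AltCycle E)

lemma n_pos : 0 < C.n := by have := C.two_le; omega

lemma edge_add_mul (i k : ℕ) : C.edge (i + k * C.n) = C.edge i := by
  induction k with
  | zero => simp
  | succ k ih => rw [Nat.succ_mul, ← Nat.add_assoc, C.edge_periodic, ih]

lemma vert_add_mul (i k : ℕ) : C.vert (i + k * C.n) = C.vert i := by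
  induction k with
  | zero => simp
  | succ k ih => rw [Nat.succ_mul, ← Nat.add_assoc, C.vert_periodic, ih]

lemma edge_mod (i : ℕ) : C.edge (i % C.n) = C.edge i := by
  conv_rhs => rw [← Nat.mod_add_div i C.n, Nat.mul_comm]
  rw [C.edge_add_mul]

lemma vert_mod (i : ℕ) : C.vert (i % C.n) = C.vert i := by
  conv_rhs => rw [← Nat.mod_add_div i C.n, Nat.mul_comm]
  rw [C.vert_add_mul]

lemma edge_congr {i j : ℕ} (h : i % C.n = j % C.n) : C.edge i = C.edge j := by
  rw [← C.edge_mod i, ← C.edge_mod j, h]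

lemma vert_congr {i j : ℕ} (h : i % C.n = j % C.n) : C.vert i = C.vert j := by
  rw [← C.vert_mod i, ← C.vert_mod j, h]

lemma lab_succ (i : ℕ) : (C.edge (i + 1)).lab = !(C.edge i).lab := by
  rw [C.alt i, Bool.not_not]

lemma lab_add_two (i : ℕ) : (C.edge (i + 2)).lab = (C.edge i).lab := by
  have h1 := C.lab_succ (i + 1)
  have h2 := C.lab_succ i
  rw [h2] at h1
  rw [show i + 2 = i + 1 + 1 from rfl, h1, Bool.not_not]

lemma lab_add_two_mul (i k : ℕ) : (C.edge (i + 2 * k)).lab = (C.edge i).lab := by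
  induction k with
  | zero => rfl
  | succ k ih =>
    have : i + 2 * (k + 1) = i + 2 * k + 2 := by ring
    rw [this, C.lab_add_two, ih]

lemma lab_eq_of_parity {i j : ℕ} (h : i % 2 = j % 2) :
    (C.edge i).lab = (C.edge j).lab := by
  rcases le_total i j with hle | hle
  · obtain ⟨k, hk⟩ : ∃ k, j = i + 2 * k := ⟨(j - i) / 2, by omega⟩
    rw [hk, C.lab_add_two_mul]
  · obtain ⟨k, hk⟩ : ∃ k, i = j + 2 * k := ⟨(i - j) / 2, by omega⟩
    rw [hk, C.lab_add_two_mul]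

lemma lab_ne_of_parity {i j : ℕ} (h : i % 2 ≠ j % 2) :
    (C.edge i).lab ≠ (C.edge j).lab := by
  rcases le_total i j with hle | hle
  · obtain ⟨k, hk⟩ : ∃ k, j = i + 2 * k + 1 := ⟨(j - i) / 2, by omega⟩
    rw [hk, show i + 2 * k + 1 = i + 2*k + 1 from rfl, C.lab_succ, C.lab_add_two_mul]
    cases (C.edge i).lab <;> simp
  · obtain ⟨k, hk⟩ : ∃ k, i = j + 2 * k + 1 := ⟨(i - j) / 2, by omega⟩
    rw [hk, C.lab_succ, C.lab_add_two_mul]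
    cases (C.edge j).lab <;> simp

lemma lab_not_of_parity {i j : ℕ} (h : i % 2 ≠ j % 2) :
    (C.edge i).lab = !(C.edge j).lab := by
  have := C.lab_ne_of_parity h
  cases hx : (C.edge i).lab <;> cases hy : (C.edge j).lab <;> simp_all

lemma n_even : C.n % 2 = 0 := by
  by_contra h
  have h1 : (0 : ℕ) % 2 ≠ C.n % 2 := by omega
  have := C.lab_ne_of_parity h1
  rw [show C.n = 0 + C.n from (Nat.zero_add _).symm, C.edge_periodic] at this
  exact this rfl

lemma card_edges : C.edges.card = C.n := by
  rw [AltCycle.edges, Finset.card_image_of_injOn, Finset.card_range]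
  intro i hi j hj h
  exact C.inj i (Finset.mem_range.1 hi) j (Finset.mem_range.1 hj) h

lemma edge_inj_win {i j : ℕ} (h1 : i ≤ j) (h2 : j < i + C.n) (h : C.edge i = C.edge j) :
    i = j := by
  have e1 : C.edge (i % C.n) = C.edge (j % C.n) := by rw [C.edge_mod, C.edge_mod, h]
  have hm : i % C.n = j % C.n :=
    C.inj _ (Nat.mod_lt _ C.n_pos) _ (Nat.mod_lt _ C.n_pos) e1
  have hmeq : i ≡ j [MOD C.n] := hm
  have hd : C.n ∣ j - i := (Nat.modEq_iff_dvd' h1).1 hmeq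
  rcases Nat.eq_zero_or_pos (j - i) with h0 | h0
  · omega
  · have := Nat.le_of_dvd h0 hd
    omega

end AltCycle
set_option maxHeartbeats 1000000 in
/-- Case 4.4 of the proof of Lemma `connected_when_one_cycle`
cannot occur.  `M(H0 Δ H*)` is exactly one minimal alternating cycle `C*`
containing `e1 = {a,b}_{H0,t}`, `e2 = {b,c}_{H*,t}`, `e3 = {c,d}_{H0,s}`,
`e4 = {a,d}_{H0,s}` and `e5 = {a,f}_{H*,u}` with `a,b,c,d,f` pairwise distinct.
Then `M(H0 Δ H*)` does not contain the edge `e6 = {f,c}_{H*,u}`, i.e.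
`(u,{f,c}) ∉ A(H*) \ A(H0)`. -/
theorem case_4_4_impossible {V : Type*} [DecidableEq V]
    (D : DegreeSeq V) (A0 A1 : Finset (Hyperarc V))
    (h0 : Realizes A0 D) (h1 : Realizes A1 D)
    (C : AltCycle (mEdges A0 A1)) (hmin : C.Minimal) (hall : C.edges = mEdges A0 A1)
    (a b c d f : V) (t s u : Tail)
    (hdist : ([a, b, c, d, f] : List V).Pairwise (· ≠ ·))
    (he1 : (⟨true, t, s(a, b)⟩ : MEdge V) ∈ C.edges)
    (he2 : (⟨false, t, s(b, c)⟩ : MEdge V) ∈ C.edges)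
    (he3 : (⟨true, s, s(c, d)⟩ : MEdge V) ∈ C.edges)
    (he4 : (⟨true, s, s(a, d)⟩ : MEdge V) ∈ C.edges)
    (he5 : (⟨false, u, s(a, f)⟩ : MEdge V) ∈ C.edges) :
    (u, s(f, c)) ∉ A1 \ A0 := by
  intro h6
  simp only [List.pairwise_cons, List.mem_cons, List.mem_singleton, List.not_mem_nil,
    List.Pairwise.nil, List.mem_nil_iff] at hdist
  obtain ⟨hd1, hd2, hd3, hd4, -⟩ := hdist
  have hab : a ≠ b := hd1 _ (by simp)
  have hac : a ≠ c := hd1 _ (by simp)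
  have had : a ≠ d := hd1 _ (by simp)
  have haf : a ≠ f := hd1 _ (by simp)
  have hbc : b ≠ c := hd2 _ (by simp)
  have hbd : b ≠ d := hd2 _ (by simp)
  have hbf : b ≠ f := hd2 _ (by simp)
  have hcd : c ≠ d := hd3 _ (by simp)
  have hcf : c ≠ f := hd3 _ (by simp)
  have hdf : d ≠ f := hd4 _ (by simp)
  clear hd1 hd2 hd3 hd4
  have he6 : (⟨false, u, s(f, c)⟩ : MEdge V) ∈ C.edges := by
    rw [hall]
    exact Finset.mem_union_right _ (Finset.mem_image.2 ⟨(u, s(f, c)), h6, rfl⟩)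
  have npos : 0 < C.n := C.n_pos
  have neven : C.n % 2 = 0 := C.n_even
  -- minimality: every alternating cycle over mEdges has length ≥ C.n
  have min_n : ∀ C' : AltCycle (mEdges A0 A1), C.n ≤ C'.n := by
    intro C'
    have hsub : C'.edges ⊆ C.edges := by
      rw [hall]
      intro e he
      rw [AltCycle.edges] at he
      obtain ⟨i, -, rfl⟩ := Finset.mem_image.1 he
      exact C'.mem i
    have hedges := hmin C' hsub
    have h1 : C.edges.card = C.n := C.card_edges
    have h2 : C'.edges.card ≤ C'.n := by
      rw [AltCycle.edges]
      exact (Finset.card_image_le).trans (le_of_eq (Finset.card_range _))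
    rw [← hedges, h1] at *
    omega
  -- no two occurrences of the same vertex at positive even distance < n
  have nogap : ∀ i dd : ℕ, 0 < dd → dd < C.n → dd % 2 = 0 → C.vert (i + dd) = C.vert i →
      False := by
    intro i dd hd0 hdn hd2 hv
    have hd2le : 2 ≤ dd := by omega
    have hlt := min_n
      { n := dd
        two_le := hd2le
        edge := fun k => C.edge (i + k % dd)
        vert := fun k => C.vert (i + k % dd)
        edge_periodic := fun k => by beta_reduce; rw [Nat.add_mod_right]
        vert_periodic := fun k => by beta_reduce; rw [Nat.add_mod_right]
        mem := fun k => C.mem _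
        inj := by
          intro k hk l hl h
          beta_reduce at h
          rw [Nat.mod_eq_of_lt hk, Nat.mod_eq_of_lt hl] at h
          rcases le_total k l with hle | hle
          · have := C.edge_inj_win (Nat.add_le_add_left hle i) (by omega) h
            omega
          · have := C.edge_inj_win (Nat.add_le_add_left hle i) (by omega) h.symm
            omega
        ends_eq := by
          intro k
          beta_reduce
          have hk : k % dd < dd := Nat.mod_lt _ (by omega)
          have hsucc : (k + 1) % dd = (k % dd + 1) % dd := by
            rw [Nat.mod_add_mod]
          rcases Nat.lt_or_ge (k % dd + 1) dd with h | h
          · rw [hsucc, Nat.mod_eq_of_lt h, C.ends_eq, ← Nat.add_assoc]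
          · have heq : k % dd + 1 = dd := by omega
            have h0 : (k + 1) % dd = 0 := by rw [hsucc, heq, Nat.mod_self]
            rw [h0, C.ends_eq, Nat.add_assoc, heq, hv]
            norm_num
        alt := by
          intro k
          beta_reduce
          have hk : k % dd < dd := Nat.mod_lt _ (by omega)
          have hsucc : (k + 1) % dd = (k % dd + 1) % dd := by rw [Nat.mod_add_mod]
          rcases Nat.lt_or_ge (k % dd + 1) dd with h | h
          · rw [hsucc, Nat.mod_eq_of_lt h, ← Nat.add_assoc]
            exact C.alt _
          · have heq : k % dd + 1 = dd := by omega
            have h0 : (k + 1) % dd = 0 := by rw [hsucc, heq, Nat.mod_self]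
            rw [h0]
            exact C.lab_not_of_parity (by omega) }
    have : C.n ≤ dd := hlt
    omega
  have occ_eq : ∀ i j : ℕ, i < C.n → j < C.n → C.vert i = C.vert j → i % 2 = j % 2 →
      i = j := by
    intro i j hi hj hv hp
    by_contra hne
    rcases le_total i j with hle | hle
    · exact nogap i (j - i) (by omega) (by omega) (by omega)
        (by rw [show i + (j - i) = j from by omega]; exact hv.symm)
    · exact nogap j (i - j) (by omega) (by omega) (by omega)
        (by rw [show j + (i - j) = i from by omega]; exact hv)
  -- no crossing chords
  have nocross : ∀ i d1 d2 d3 : ℕ, 0 < d1 → 0 < d2 → 0 < d3 → d1 + d2 + d3 < C.n →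
      C.vert i = C.vert (i + (d1 + d2)) →
      C.vert (i + d1) = C.vert (i + (d1 + d2 + d3)) → False := by
    intro i d1 d2 d3 h1 h2 h3 hsum hv1 hv2
    have o1 : (d1 + d2) % 2 = 1 := by
      by_contra h
      exact nogap i (d1 + d2) (by omega) (by omega) (by omega) hv1.symm
    have o2 : (d2 + d3) % 2 = 1 := by
      by_contra h
      exact nogap (i + d1) (d2 + d3) (by omega) (by omega) (by omega)
        (by rw [show i + d1 + (d2 + d3) = i + (d1 + d2 + d3) from by omega]; exact hv2.symm)
    have mpos : 0 < d1 + d3 := by omega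
    have winj : ∀ x y, i ≤ x → x ≤ i + (d1 + d2 + d3) → i ≤ y → y ≤ i + (d1 + d2 + d3) →
        C.edge x = C.edge y → x = y := by
      intro x y hx1 hx2 hy1 hy2 hxy
      rcases le_total x y with hle | hle
      · exact C.edge_inj_win hle (by omega) hxy
      · exact (C.edge_inj_win hle (by omega) hxy.symm).symm
    have hlt := min_n
      { n := d1 + d3
        two_le := by omega
        edge := fun k => if k % (d1 + d3) < d1 then C.edge (i + k % (d1 + d3))
          else C.edge (i + d1 + d2 + d3 - 1 - (k % (d1 + d3) - d1))
        vert := fun k => if k % (d1 + d3) < d1 then C.vert (i + k % (d1 + d3))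
          else C.vert (i + d1 + d2 + d3 - (k % (d1 + d3) - d1))
        edge_periodic := fun k => by beta_reduce; rw [Nat.add_mod_right]
        vert_periodic := fun k => by beta_reduce; rw [Nat.add_mod_right]
        mem := fun k => by beta_reduce; split_ifs <;> exact C.mem _
        inj := by
          intro k hk l hl h
          beta_reduce at h
          rw [Nat.mod_eq_of_lt hk, Nat.mod_eq_of_lt hl] at h
          by_cases c1 : k < d1 <;> by_cases c2 : l < d1 <;>
            simp only [if_pos, if_neg, c1, c2, if_true, if_false] at h <;>
            [skip; skip; skip; skip] <;>
            have := winj _ _ (by omega) (by omega) (by omega) (by omega) h <;> omega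
        ends_eq := by
          intro k
          beta_reduce
          obtain ⟨q, hqlt, hqe⟩ : ∃ q, q < d1 + d3 ∧ k % (d1 + d3) = q :=
            ⟨_, Nat.mod_lt _ mpos, rfl⟩
          have hs1 : (k + 1) % (d1 + d3) = (q + 1) % (d1 + d3) := by
            rw [← Nat.mod_add_mod, hqe]
          rw [hqe, hs1]
          rcases (by omega : q + 1 < d1 ∨ q + 1 = d1 ∨ (d1 ≤ q ∧ q + 1 < d1 + d3) ∨
              (d1 ≤ q ∧ q + 1 = d1 + d3)) with h | h | ⟨h, h'⟩ | ⟨h, h'⟩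
          · rw [Nat.mod_eq_of_lt (by omega), if_pos (by omega), if_pos (by omega),
              if_pos (by omega), C.ends_eq, ← Nat.add_assoc]
          · rw [Nat.mod_eq_of_lt (by omega), if_pos (by omega), if_pos (by omega),
              if_neg (by omega), C.ends_eq,
              show q + 1 - d1 = 0 from by omega, Nat.sub_zero]
            rw [show i + q + 1 = i + d1 from by omega]
            rw [hv2, show i + (d1 + d2 + d3) = i + d1 + d2 + d3 from by omega]
          · rw [Nat.mod_eq_of_lt (by omega), if_neg (by omega), if_neg (by omega),
              if_neg (by omega), C.ends_eq]
            rw [show i + d1 + d2 + d3 - (q - d1) = (i + d1 + d2 + d3 - 1 - (q - d1)) + 1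
              from by omega]
            rw [show i + d1 + d2 + d3 - (q + 1 - d1) = i + d1 + d2 + d3 - 1 - (q - d1)
              from by omega]
            exact Sym2.eq_swap
          · rw [h', Nat.mod_self, if_neg (by omega), if_neg (by omega), if_pos (by omega),
              C.ends_eq]
            rw [show i + d1 + d2 + d3 - 1 - (q - d1) = i + d1 + d2 from by omega]
            rw [show i + d1 + d2 + d3 - (q - d1) = i + d1 + d2 + 1 from by omega]
            rw [show i + 0 = i from rfl, hv1,
              show i + (d1 + d2) = i + d1 + d2 from by omega]
            exact Sym2.eq_swap
        alt := by
          intro k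
          beta_reduce
          obtain ⟨q, hqlt, hqe⟩ : ∃ q, q < d1 + d3 ∧ k % (d1 + d3) = q :=
            ⟨_, Nat.mod_lt _ mpos, rfl⟩
          have hs1 : (k + 1) % (d1 + d3) = (q + 1) % (d1 + d3) := by
            rw [← Nat.mod_add_mod, hqe]
          rw [hqe, hs1]
          rcases (by omega : q + 1 < d1 ∨ q + 1 = d1 ∨ (d1 ≤ q ∧ q + 1 < d1 + d3) ∨
              (d1 ≤ q ∧ q + 1 = d1 + d3)) with h | h | ⟨h, h'⟩ | ⟨h, h'⟩
          · rw [Nat.mod_eq_of_lt (by omega), if_pos (by omega), if_pos (by omega)]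
            exact C.lab_not_of_parity (by omega)
          · rw [Nat.mod_eq_of_lt (by omega), if_pos (by omega), if_neg (by omega)]
            exact C.lab_not_of_parity (by omega)
          · rw [Nat.mod_eq_of_lt (by omega), if_neg (by omega), if_neg (by omega)]
            exact C.lab_not_of_parity (by omega)
          · rw [h', Nat.mod_self, if_neg (by omega), if_pos (by omega)]
            exact C.lab_not_of_parity (by omega) }
    have : C.n ≤ d1 + d3 := hlt
    omega
  -- parity from congruence mod n
  have parmod : ∀ x y : ℕ, x % C.n = y % C.n → x % 2 = y % 2 := by
    intro x y h
    exact Nat.ModEq.of_dvd (by omega) h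
  -- coordinates relative to a base α
  have coord : ∀ α x : ℕ, α < C.n → (α + (x + C.n - α) % C.n) % C.n = x % C.n := by
    intro α x hα
    rw [Nat.add_mod_mod, show α + (x + C.n - α) = x + C.n from by omega,
      Nat.add_mod_right]
  have labpar : ∀ (i j : ℕ) (bi bj : Bool), (C.edge i).lab = bi → (C.edge j).lab = bj →
      bi ≠ bj → i % 2 ≠ j % 2 := by
    intro i j bi bj hi hj hne hp
    exact hne (by rw [← hi, ← hj]; exact C.lab_eq_of_parity hp)
  have labpar2 : ∀ (i j : ℕ) (bi : Bool), (C.edge i).lab = bi → (C.edge j).lab = bi →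
      i % 2 = j % 2 := by
    intro i j bi hi hj
    by_contra hp
    exact C.lab_ne_of_parity hp (by rw [hi, hj])
  -- pattern 1 : three chords from consecutive positions, nested pair, impossible
  have pattern1 : ∀ (x y z w : V) (α B G : ℕ),
      x ≠ y → x ≠ z → x ≠ w → y ≠ z → y ≠ w →
      B < C.n → G < C.n → B ≠ 2 → B + 2 ≠ C.n → G ≠ 1 →
      C.vert α = x → C.vert (α + 1) = y → C.vert (α + 2) = z →
      C.vert (α + B) = z → C.vert (α + B + 1) = w → C.vert (α + B + 2) = x →
      C.vert (α + G) = y → False := by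
    intro x y z w α B G hxy hxz hxw hyz hyw hB hG hB2 hB2n hG1 v0 v1 v2 vB vB1 vB2 vG
    have hB0 : B ≠ 0 := by
      intro h; subst h; rw [Nat.add_zero] at vB; exact hxz (v0.symm.trans vB)
    have hB1 : B ≠ 1 := by
      intro h; subst h; exact hyz (v1.symm.trans vB)
    have hB1n : B + 1 ≠ C.n := by
      intro h
      have e : C.vert (α + B + 1) = C.vert α := by rw [Nat.add_assoc, h]; exact C.vert_periodic α
      exact hxw (v0.symm.trans (e.symm.trans vB1))
    have hG0 : G ≠ 0 := by
      intro h; subst h; rw [Nat.add_zero] at vG; exact hxy (v0.symm.trans vG)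
    have hG2 : G ≠ 2 := by
      intro h; subst h; exact hyz (vG.symm.trans v2)
    have hGB : G ≠ B := by
      intro h; subst h; exact hyz (vG.symm.trans vB)
    have hGB1 : G ≠ B + 1 := by
      intro h
      rw [h, ← Nat.add_assoc] at vG
      exact hyw (vG.symm.trans vB1)
    have hGB2 : G ≠ B + 2 := by
      intro h
      rw [h, show α + (B + 2) = α + B + 2 from by omega] at vG
      exact hxy (vG.symm.trans vB2).symm
    rcases (by omega : (3 ≤ G ∧ G < B) ∨ (B + 3 ≤ G)) with ⟨hg3, hgB⟩ | hg
    · exact nocross (α + 1) 1 (G - 2) (B - G) (by omega) (by omega) (by omega) (by omega)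
        (by rw [show α + 1 + (1 + (G - 2)) = α + G from by omega, vG, v1])
        (by rw [show α + 1 + 1 = α + 2 from by omega,
            show α + 1 + (1 + (G - 2) + (B - G)) = α + B from by omega, vB, v2])
    · exact nocross α 1 (B + 1) (G - B - 2) (by omega) (by omega) (by omega) (by omega)
        (by rw [show α + (1 + (B + 1)) = α + B + 2 from by omega, vB2, v0])
        (by rw [show α + (1 + (B + 1) + (G - B - 2)) = α + G from by omega, vG, v1])
  -- pattern 2 : run of five, two linked chords, impossible
  have pattern2 : ∀ (x0 x1 x2 x3 x4 : V) (α S T : ℕ),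
      x0 ≠ x1 → x0 ≠ x2 → x0 ≠ x3 → x0 ≠ x4 → x1 ≠ x2 → x1 ≠ x3 → x1 ≠ x4 →
      x2 ≠ x3 → x2 ≠ x4 → x3 ≠ x4 →
      S < C.n → T < C.n → S ≠ 3 → S + 1 ≠ C.n → T ≠ 4 →
      C.vert α = x0 → C.vert (α + 1) = x1 → C.vert (α + 2) = x2 → C.vert (α + 3) = x3 →
      C.vert (α + 4) = x4 → C.vert (α + S) = x3 → C.vert (α + S + 1) = x0 →
      C.vert (α + T) = x4 → C.vert (α + T + 1) = x1 → False := by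
    intro x0 x1 x2 x3 x4 α S T h01 h02 h03 h04 h12 h13 h14 h23 h24 h34
    intro hS hT hS3 hS1n hT4 v0 v1 v2 v3 v4 vS vS1 vT vT1
    have hS0 : S ≠ 0 := by
      intro h; subst h; rw [Nat.add_zero] at vS; exact h03 (v0.symm.trans vS)
    have hS1 : S ≠ 1 := by
      intro h; subst h; exact h13 (v1.symm.trans vS)
    have hS2 : S ≠ 2 := by
      intro h; subst h; exact h23 (v2.symm.trans vS)
    have hS4 : S ≠ 4 := by
      intro h; subst h; exact h34 (vS.symm.trans v4)
    have hT0 : T ≠ 0 := by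
      intro h; subst h; rw [Nat.add_zero] at vT; exact h04 (v0.symm.trans vT)
    have hT1 : T ≠ 1 := by
      intro h; subst h; exact h14 (v1.symm.trans vT)
    have hT2 : T ≠ 2 := by
      intro h; subst h; exact h24 (v2.symm.trans vT)
    have hT3 : T ≠ 3 := by
      intro h; subst h; exact h34 (v3.symm.trans vT)
    have hT1n : T + 1 ≠ C.n := by
      intro h
      have e : C.vert (α + T + 1) = C.vert α := by
        rw [Nat.add_assoc, h]; exact C.vert_periodic α
      exact h01 (v0.symm.trans (e.symm.trans vT1))
    have hTS : T ≠ S := by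
      intro h; subst h; exact h34 (vT.symm.trans vS).symm
    have hTS1 : T ≠ S + 1 := by
      intro h
      rw [h, ← Nat.add_assoc] at vT
      exact h04 (vS1.symm.trans vT)
    have hST1 : S ≠ T + 1 := by
      intro h
      rw [h, ← Nat.add_assoc] at vS
      exact h13 (vT1.symm.trans vS)
    rcases (by omega : T + 2 ≤ S ∨ S + 2 ≤ T) with hc | hc
    · exact nocross (α + 1) 2 (T - 2) (S - T - 1) (by omega) (by omega) (by omega) (by omega)
        (by rw [show α + 1 + (2 + (T - 2)) = α + T + 1 from by omega, vT1, v1])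
        (by rw [show α + 1 + 2 = α + 3 from by omega,
            show α + 1 + (2 + (T - 2) + (S - T - 1)) = α + S from by omega, vS, v3])
    · exact nocross α 4 (S - 3) (T - S - 1) (by omega) (by omega) (by omega) (by omega)
        (by rw [show α + (4 + (S - 3)) = α + S + 1 from by omega, vS1, v0])
        (by rw [show α + (4 + (S - 3) + (T - S - 1)) = α + T from by omega, vT, v4])
  -- edge distinctness
  have hne14 : (⟨true, t, s(a, b)⟩ : MEdge V) ≠ ⟨true, s, s(a, d)⟩ := by
    intro h
    injection h with _ _ h3
    rcases Sym2.eq_iff.1 h3 with ⟨-, h'⟩ | ⟨h', -⟩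
    exacts [hbd h', had h']
  have hne34 : (⟨true, s, s(c, d)⟩ : MEdge V) ≠ ⟨true, s, s(a, d)⟩ := by
    intro h
    injection h with _ _ h3
    rcases Sym2.eq_iff.1 h3 with ⟨h', -⟩ | ⟨h', -⟩
    exacts [hac h'.symm, hcd h']
  have hne56 : (⟨false, u, s(a, f)⟩ : MEdge V) ≠ ⟨false, u, s(f, c)⟩ := by
    intro h
    injection h with _ _ h3
    rcases Sym2.eq_iff.1 h3 with ⟨h', -⟩ | ⟨h', -⟩
    exacts [haf h', hac h']
  have hne26 : (⟨false, t, s(b, c)⟩ : MEdge V) ≠ ⟨false, u, s(f, c)⟩ := by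
    intro h
    injection h with _ _ h3
    rcases Sym2.eq_iff.1 h3 with ⟨h', -⟩ | ⟨h', -⟩
    exacts [hbf h', hbc h']
  -- positions
  have getpos : ∀ e : MEdge V, e ∈ C.edges → ∃ p, p < C.n ∧ C.edge p = e := by
    intro e he
    rw [AltCycle.edges] at he
    obtain ⟨p, hp, rfl⟩ := Finset.mem_image.1 he
    exact ⟨p, Finset.mem_range.1 hp, rfl⟩
  obtain ⟨p1, hp1, hE1⟩ := getpos _ he1
  obtain ⟨p2, hp2, hE2⟩ := getpos _ he2
  obtain ⟨p3, hp3, hE3⟩ := getpos _ he3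
  obtain ⟨p4, hp4, hE4⟩ := getpos _ he4
  obtain ⟨p5, hp5, hE5⟩ := getpos _ he5
  obtain ⟨p6, hp6, hE6⟩ := getpos _ he6
  have hl1 : (C.edge p1).lab = true := by rw [hE1]
  have hl2 : (C.edge p2).lab = false := by rw [hE2]
  have hl3 : (C.edge p3).lab = true := by rw [hE3]
  have hl4 : (C.edge p4).lab = true := by rw [hE4]
  have hl5 : (C.edge p5).lab = false := by rw [hE5]
  have hl6 : (C.edge p6).lab = false := by rw [hE6]
  have o1 : (a = C.vert p1 ∧ b = C.vert (p1 + 1)) ∨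
      (a = C.vert (p1 + 1) ∧ b = C.vert p1) := by
    have h := C.ends_eq p1; rw [hE1] at h; exact Sym2.eq_iff.1 h
  have o2 : (b = C.vert p2 ∧ c = C.vert (p2 + 1)) ∨
      (b = C.vert (p2 + 1) ∧ c = C.vert p2) := by
    have h := C.ends_eq p2; rw [hE2] at h; exact Sym2.eq_iff.1 h
  have o3 : (c = C.vert p3 ∧ d = C.vert (p3 + 1)) ∨
      (c = C.vert (p3 + 1) ∧ d = C.vert p3) := by
    have h := C.ends_eq p3; rw [hE3] at h; exact Sym2.eq_iff.1 h
  have o4 : (a = C.vert p4 ∧ d = C.vert (p4 + 1)) ∨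
      (a = C.vert (p4 + 1) ∧ d = C.vert p4) := by
    have h := C.ends_eq p4; rw [hE4] at h; exact Sym2.eq_iff.1 h
  have o5 : (a = C.vert p5 ∧ f = C.vert (p5 + 1)) ∨
      (a = C.vert (p5 + 1) ∧ f = C.vert p5) := by
    have h := C.ends_eq p5; rw [hE5] at h; exact Sym2.eq_iff.1 h
  have o6 : (f = C.vert p6 ∧ c = C.vert (p6 + 1)) ∨
      (f = C.vert (p6 + 1) ∧ c = C.vert p6) := by
    have h := C.ends_eq p6; rw [hE6] at h; exact Sym2.eq_iff.1 h
  -- parities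
  have par13 : p1 % 2 = p3 % 2 := labpar2 _ _ _ hl1 hl3
  have par14 : p1 % 2 = p4 % 2 := labpar2 _ _ _ hl1 hl4
  have par34 : p3 % 2 = p4 % 2 := labpar2 _ _ _ hl3 hl4
  have par25 : p2 % 2 = p5 % 2 := labpar2 _ _ _ hl2 hl5
  have par26 : p2 % 2 = p6 % 2 := labpar2 _ _ _ hl2 hl6
  have par56 : p5 % 2 = p6 % 2 := labpar2 _ _ _ hl5 hl6
  have par12 : p1 % 2 ≠ p2 % 2 := labpar _ _ _ _ hl1 hl2 (by simp)
  have par15 : p1 % 2 ≠ p5 % 2 := labpar _ _ _ _ hl1 hl5 (by simp)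
  have par16 : p1 % 2 ≠ p6 % 2 := labpar _ _ _ _ hl1 hl6 (by simp)
  have par23 : p2 % 2 ≠ p3 % 2 := fun h => (labpar _ _ _ _ hl2 hl3 (by simp)) h
  have par24 : p2 % 2 ≠ p4 % 2 := labpar _ _ _ _ hl2 hl4 (by simp)
  have par35 : p3 % 2 ≠ p5 % 2 := labpar _ _ _ _ hl3 hl5 (by simp)
  have par36 : p3 % 2 ≠ p6 % 2 := labpar _ _ _ _ hl3 hl6 (by simp)
  have par45 : p4 % 2 ≠ p5 % 2 := labpar _ _ _ _ hl4 hl5 (by simp)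
  have par46 : p4 % 2 ≠ p6 % 2 := labpar _ _ _ _ hl4 hl6 (by simp)
  -- occurrence helpers
  have hh : ∀ pi pj, pi < C.n → pj < C.n → C.vert (pi + 1) = C.vert (pj + 1) →
      pi % 2 = pj % 2 → pi = pj := by
    intro pi pj hi hj hv hp
    have h1 : C.vert ((pi + 1) % C.n) = C.vert ((pj + 1) % C.n) := by
      rw [C.vert_mod, C.vert_mod]; exact hv
    have e1 : (pi + 1) % C.n % 2 = (pi + 1) % 2 := Nat.mod_mod_of_dvd _ (by omega)
    have e2 : (pj + 1) % C.n % 2 = (pj + 1) % 2 := Nat.mod_mod_of_dvd _ (by omega)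
    have key := occ_eq _ _ (Nat.mod_lt _ (by omega)) (Nat.mod_lt _ (by omega)) h1 (by omega)
    rcases (by omega : pi + 1 = C.n ∨ pi + 1 < C.n) with h4 | h4 <;>
      rcases (by omega : pj + 1 = C.n ∨ pj + 1 < C.n) with h5 | h5
    · omega
    · rw [h4, Nat.mod_self, Nat.mod_eq_of_lt h5] at key; omega
    · rw [h5, Nat.mod_self, Nat.mod_eq_of_lt h4] at key; omega
    · rw [Nat.mod_eq_of_lt h4, Nat.mod_eq_of_lt h5] at key; omega
  have th : ∀ pi pj, pi < C.n → pj < C.n → C.vert pi = C.vert (pj + 1) →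
      pi % 2 ≠ pj % 2 → pi = (pj + 1) % C.n := by
    intro pi pj hi hj hv hp
    have h1 : C.vert pi = C.vert ((pj + 1) % C.n) := by rw [C.vert_mod]; exact hv
    have e2 : (pj + 1) % C.n % 2 = (pj + 1) % 2 := Nat.mod_mod_of_dvd _ (by omega)
    exact occ_eq _ _ hi (Nat.mod_lt _ (by omega)) h1 (by omega)
  have modeq_succ : ∀ x y : ℕ, x % C.n = y % C.n → (x + 1) % C.n = (y + 1) % C.n := by
    intro x y h
    rw [← Nat.mod_add_mod, h, Nat.mod_add_mod]
  -- main case analysis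
  rcases o4 with ⟨ha4, hd4v⟩ | ⟨ha4, hd4v⟩
  · -- Case A : e4 = a → d
    rcases o1 with ⟨ha1, hb1⟩ | ⟨ha1, hb1⟩
    · -- a also tail of e1 : impossible
      have := occ_eq p1 p4 hp1 hp4 (ha1.symm.trans ha4) par14
      exact hne14 (by rw [← hE1, this, hE4])
    rcases o3 with ⟨hc3, hd3'⟩ | ⟨hc3, hd3'⟩
    · -- d head of e3 and of e4 : impossible
      have := hh p3 p4 hp3 hp4 (hd3'.symm.trans hd4v) par34
      exact hne34 (by rw [← hE3, this, hE4])
    -- Case A : e3 = d → c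
    rcases o5 with ⟨ha5, hf5⟩ | ⟨ha5, hf5⟩
    · -- A2 : e5 = a → f
      rcases o6 with ⟨hf6, hc6⟩ | ⟨hf6, hc6⟩
      · -- e6 = f → c ; good
        rcases o2 with ⟨hb2, hc2⟩ | ⟨hb2, hc2⟩
        · -- c head of e2 and of e6 : impossible
          have := hh p2 p6 hp2 hp6 (hc2.symm.trans hc6) par26
          exact hne26 (by rw [← hE2, this, hE6])
        -- CASE A2 : run d,c,b,a,f at p3..p3+4 ; chords a{3,S}/d{0,S+1}, f{4,T}/c{1,T+1}
        have k51 : p5 = (p1 + 1) % C.n :=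
          th p5 p1 hp5 hp1 (ha5.symm.trans ha1) (fun h => par15 h.symm)
        have k23 : p2 = (p3 + 1) % C.n := th p2 p3 hp2 hp3 (hc2.symm.trans hc3) par23
        have k12 : p1 = (p2 + 1) % C.n :=
          th p1 p2 hp1 hp2 (hb1.symm.trans hb2) par12
        have v0 : C.vert p3 = d := hd3'.symm
        have v1 : C.vert (p3 + 1) = c := hc3.symm
        have m23 : p2 % C.n = (p3 + 1) % C.n := by rw [Nat.mod_eq_of_lt hp2]; exact k23
        have m23' := modeq_succ _ _ m23
        rw [show p3 + 1 + 1 = p3 + 2 from by omega] at m23'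
        have v2 : C.vert (p3 + 2) = b := (C.vert_congr m23'.symm).trans hb2.symm
        have m12 : p1 % C.n = (p2 + 1) % C.n := by rw [Nat.mod_eq_of_lt hp1]; exact k12
        have m1c : p1 % C.n = (p3 + 2) % C.n := m12.trans m23'
        have m1c' := modeq_succ _ _ m1c
        rw [show p3 + 2 + 1 = p3 + 3 from by omega] at m1c'
        have v3 : C.vert (p3 + 3) = a := (C.vert_congr m1c'.symm).trans ha1.symm
        have m51 : p5 % C.n = (p1 + 1) % C.n := by rw [Nat.mod_eq_of_lt hp5]; exact k51
        have m5c : p5 % C.n = (p3 + 3) % C.n := m51.trans m1c'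
        have m5c' := modeq_succ _ _ m5c
        rw [show p3 + 3 + 1 = p3 + 4 from by omega] at m5c'
        have v4 : C.vert (p3 + 4) = f := (C.vert_congr m5c'.symm).trans hf5.symm
        obtain ⟨S, hSlt, cS⟩ : ∃ S, S < C.n ∧ (p3 + S) % C.n = p4 % C.n :=
          ⟨_, Nat.mod_lt _ npos, coord p3 p4 hp3⟩
        obtain ⟨T, hTlt, cT⟩ : ∃ T, T < C.n ∧ (p3 + T) % C.n = p6 % C.n :=
          ⟨_, Nat.mod_lt _ npos, coord p3 p6 hp3⟩
        have vS : C.vert (p3 + S) = a := (C.vert_congr cS).trans ha4.symm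
        have mS1 := modeq_succ _ _ cS
        have vS1 : C.vert (p3 + S + 1) = d := (C.vert_congr mS1).trans hd4v.symm
        have vT : C.vert (p3 + T) = f := (C.vert_congr cT).trans hf6.symm
        have mT1 := modeq_succ _ _ cT
        have vT1 : C.vert (p3 + T + 1) = c := (C.vert_congr mT1).trans hc6.symm
        have hS3 : S ≠ 3 := by
          intro h; rw [h] at cS
          have := parmod _ _ cS
          omega
        have hS1n : S + 1 ≠ C.n := by
          intro h
          have h1 : (p3 + S + 1) % C.n = p3 % C.n := by
            rw [show p3 + S + 1 = p3 + C.n from by omega, Nat.add_mod_right]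
          have := parmod _ _ (h1.symm.trans mS1)
          omega
        have hT4 : T ≠ 4 := by
          intro h; rw [h] at cT
          have := parmod _ _ cT
          omega
        exact pattern2 d c b a f p3 S T (Ne.symm hcd) (Ne.symm hbd) (Ne.symm had) hdf
          (Ne.symm hbc) (Ne.symm hac) hcf (Ne.symm hab) hbf haf
          hSlt hTlt hS3 hS1n hT4 v0 v1 v2 v3 v4 vS vS1 vT vT1
      · -- f head of e5 and of e6 : impossible
        have := hh p5 p6 hp5 hp6 (hf5.symm.trans hf6) par56
        exact hne56 (by rw [← hE5, this, hE6])
    · -- A1 : e5 = f → a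
      rcases o6 with ⟨hf6, hc6⟩ | ⟨hf6, hc6⟩
      · -- f tail of e5 and of e6 : impossible
        have := occ_eq p5 p6 hp5 hp6 (hf5.symm.trans hf6) par56
        exact hne56 (by rw [← hE5, this, hE6])
      -- CASE A1 : run f,a,d at p5,p5+1,p5+2 ; run d,c,f at p3,p3+1,p3+2
      have k45 : p4 = (p5 + 1) % C.n := th p4 p5 hp4 hp5 (ha4.symm.trans ha5) par45
      have k63 : p6 = (p3 + 1) % C.n :=
        th p6 p3 hp6 hp3 (hc6.symm.trans hc3) (fun h => par36 h.symm)
      have m45 : p4 % C.n = (p5 + 1) % C.n := by rw [Nat.mod_eq_of_lt hp4]; exact k45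
      have m45' := modeq_succ _ _ m45
      rw [show p5 + 1 + 1 = p5 + 2 from by omega] at m45'
      have v0 : C.vert p5 = f := hf5.symm
      have v1 : C.vert (p5 + 1) = a := ha5.symm
      have v2 : C.vert (p5 + 2) = d := (C.vert_congr m45'.symm).trans hd4v.symm
      obtain ⟨B, hBlt, cB⟩ : ∃ B, B < C.n ∧ (p5 + B) % C.n = p3 % C.n :=
        ⟨_, Nat.mod_lt _ npos, coord p5 p3 hp5⟩
      obtain ⟨G, hGlt, cG⟩ : ∃ G, G < C.n ∧ (p5 + G) % C.n = (p1 + 1) % C.n :=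
        ⟨_, Nat.mod_lt _ npos, coord p5 (p1 + 1) hp5⟩
      have vB : C.vert (p5 + B) = d := (C.vert_congr cB).trans hd3'.symm
      have mB1 := modeq_succ _ _ cB
      have vB1 : C.vert (p5 + B + 1) = c := (C.vert_congr mB1).trans hc3.symm
      have m63 : p6 % C.n = (p3 + 1) % C.n := by rw [Nat.mod_eq_of_lt hp6]; exact k63
      have m63' := modeq_succ _ _ m63
      have mB2 := modeq_succ _ _ mB1
      rw [show p5 + B + 1 + 1 = p5 + B + 2 from by omega] at mB2
      have mB2' : (p5 + B + 2) % C.n = (p6 + 1) % C.n := mB2.trans m63'.symm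
      have vB2 : C.vert (p5 + B + 2) = f := (C.vert_congr mB2').trans hf6.symm
      have vG : C.vert (p5 + G) = a := (C.vert_congr cG).trans ha1.symm
      have hB2 : B ≠ 2 := by
        intro h; rw [h] at cB
        have := parmod _ _ cB
        omega
      have hB2n : B + 2 ≠ C.n := by
        intro h
        have h1 : (p5 + B + 2) % C.n = p5 % C.n := by
          rw [show p5 + B + 2 = p5 + C.n from by omega, Nat.add_mod_right]
        have := parmod _ _ (h1.symm.trans mB2')
        omega
      have hG1 : G ≠ 1 := by
        intro h; rw [h] at cG
        have := parmod _ _ cG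
        omega
      exact pattern1 f a d c p5 B G (Ne.symm haf) (Ne.symm hdf) (Ne.symm hcf) had hac
        hBlt hGlt hB2 hB2n hG1 v0 v1 v2 vB vB1 vB2 vG
  · -- Case B : e4 = d → a
    rcases o1 with ⟨ha1, hb1⟩ | ⟨ha1, hb1⟩
    swap
    · -- a head of e1 and of e4 : impossible
      have := hh p1 p4 hp1 hp4 (ha1.symm.trans ha4) par14
      exact hne14 (by rw [← hE1, this, hE4])
    rcases o3 with ⟨hc3, hd3'⟩ | ⟨hc3, hd3'⟩
    swap
    · -- d tail of e3 and of e4 : impossible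
      have := occ_eq p3 p4 hp3 hp4 (hd3'.symm.trans hd4v) par34
      exact hne34 (by rw [← hE3, this, hE4])
    rcases o5 with ⟨ha5, hf5⟩ | ⟨ha5, hf5⟩
    · -- B-ii : e5 = a → f
      rcases o6 with ⟨hf6, hc6⟩ | ⟨hf6, hc6⟩
      · -- CASE B-ii : run d,a,f at p4..p4+2 ; run f,c,d at p6..p6+2 (pattern1 d a f c)
        have k54 : p5 = (p4 + 1) % C.n :=
          th p5 p4 hp5 hp4 (ha5.symm.trans ha4) (fun h => par45 h.symm)
        have k36 : p3 = (p6 + 1) % C.n := th p3 p6 hp3 hp6 (hc3.symm.trans hc6) par36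
        have v0 : C.vert p4 = d := hd4v.symm
        have v1 : C.vert (p4 + 1) = a := ha4.symm
        have m54 : p5 % C.n = (p4 + 1) % C.n := by rw [Nat.mod_eq_of_lt hp5]; exact k54
        have m54' := modeq_succ _ _ m54
        rw [show p4 + 1 + 1 = p4 + 2 from by omega] at m54'
        have v2 : C.vert (p4 + 2) = f := (C.vert_congr m54'.symm).trans hf5.symm
        obtain ⟨J, hJlt, cJ⟩ : ∃ J, J < C.n ∧ (p4 + J) % C.n = p6 % C.n :=
          ⟨_, Nat.mod_lt _ npos, coord p4 p6 hp4⟩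
        obtain ⟨G, hGlt, cG⟩ : ∃ G, G < C.n ∧ (p4 + G) % C.n = p1 % C.n :=
          ⟨_, Nat.mod_lt _ npos, coord p4 p1 hp4⟩
        have vB : C.vert (p4 + J) = f := (C.vert_congr cJ).trans hf6.symm
        have mJ1 := modeq_succ _ _ cJ
        have vB1 : C.vert (p4 + J + 1) = c := (C.vert_congr mJ1).trans hc6.symm
        have mJ2 := modeq_succ _ _ mJ1
        rw [show p4 + J + 1 + 1 = p4 + J + 2 from by omega] at mJ2
        have m36 : p3 % C.n = (p6 + 1) % C.n := by rw [Nat.mod_eq_of_lt hp3]; exact k36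
        have m36' := modeq_succ _ _ m36
        have mJ2' : (p4 + J + 2) % C.n = (p3 + 1) % C.n := mJ2.trans m36'.symm
        have vB2 : C.vert (p4 + J + 2) = d := (C.vert_congr mJ2').trans hd3'.symm
        have vG : C.vert (p4 + G) = a := (C.vert_congr cG).trans ha1.symm
        have hJ2 : J ≠ 2 := by
          intro h; rw [h] at cJ
          have := parmod _ _ cJ
          omega
        have hJ2n : J + 2 ≠ C.n := by
          intro h
          have h1 : (p4 + J + 2) % C.n = p4 % C.n := by
            rw [show p4 + J + 2 = p4 + C.n from by omega, Nat.add_mod_right]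
          have := parmod _ _ (h1.symm.trans mJ2')
          omega
        have hG1 : G ≠ 1 := by
          intro h; rw [h] at cG
          have := parmod _ _ cG
          omega
        exact pattern1 d a f c p4 J G (Ne.symm had) hdf (Ne.symm hcd) haf hac
          hJlt hGlt hJ2 hJ2n hG1 v0 v1 v2 vB vB1 vB2 vG
      · -- f head of e5 and of e6 : impossible
        have := hh p5 p6 hp5 hp6 (hf5.symm.trans hf6) par56
        exact hne56 (by rw [← hE5, this, hE6])
    · -- B-i : e5 = f → a
      rcases o6 with ⟨hf6, hc6⟩ | ⟨hf6, hc6⟩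
      · -- f tail of e5 and of e6 : impossible
        have := occ_eq p5 p6 hp5 hp6 (hf5.symm.trans hf6) par56
        exact hne56 (by rw [← hE5, this, hE6])
      rcases o2 with ⟨hb2, hc2⟩ | ⟨hb2, hc2⟩
      swap
      · -- c tail of e2 and of e6 : impossible
        have := occ_eq p2 p6 hp2 hp6 (hc2.symm.trans hc6) par26
        exact hne26 (by rw [← hE2, this, hE6])
      -- CASE B-i : run f,a,b,c,d at p5..p5+4 ; chords c{3,S}/f{0,S+1}, d{4,T}/a{1,T+1}
      have k15 : p1 = (p5 + 1) % C.n := th p1 p5 hp1 hp5 (ha1.symm.trans ha5) par15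
      have k21 : p2 = (p1 + 1) % C.n :=
        th p2 p1 hp2 hp1 (hb2.symm.trans hb1) (fun h => par12 h.symm)
      have k32 : p3 = (p2 + 1) % C.n :=
        th p3 p2 hp3 hp2 (hc3.symm.trans hc2) (fun h => par23 h.symm)
      have v0 : C.vert p5 = f := hf5.symm
      have v1 : C.vert (p5 + 1) = a := ha5.symm
      have m15 : p1 % C.n = (p5 + 1) % C.n := by rw [Nat.mod_eq_of_lt hp1]; exact k15
      have m15' := modeq_succ _ _ m15
      rw [show p5 + 1 + 1 = p5 + 2 from by omega] at m15'
      have v2 : C.vert (p5 + 2) = b := (C.vert_congr m15'.symm).trans hb1.symm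
      have m21 : p2 % C.n = (p1 + 1) % C.n := by rw [Nat.mod_eq_of_lt hp2]; exact k21
      have m2c : p2 % C.n = (p5 + 2) % C.n := m21.trans m15'
      have m2c' := modeq_succ _ _ m2c
      rw [show p5 + 2 + 1 = p5 + 3 from by omega] at m2c'
      have v3 : C.vert (p5 + 3) = c := (C.vert_congr m2c'.symm).trans hc2.symm
      have m32 : p3 % C.n = (p2 + 1) % C.n := by rw [Nat.mod_eq_of_lt hp3]; exact k32
      have m3c : p3 % C.n = (p5 + 3) % C.n := m32.trans m2c'
      have m3c' := modeq_succ _ _ m3c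
      rw [show p5 + 3 + 1 = p5 + 4 from by omega] at m3c'
      have v4 : C.vert (p5 + 4) = d := (C.vert_congr m3c'.symm).trans hd3'.symm
      obtain ⟨S, hSlt, cS⟩ : ∃ S, S < C.n ∧ (p5 + S) % C.n = p6 % C.n :=
        ⟨_, Nat.mod_lt _ npos, coord p5 p6 hp5⟩
      obtain ⟨T, hTlt, cT⟩ : ∃ T, T < C.n ∧ (p5 + T) % C.n = p4 % C.n :=
        ⟨_, Nat.mod_lt _ npos, coord p5 p4 hp5⟩
      have vS : C.vert (p5 + S) = c := (C.vert_congr cS).trans hc6.symm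
      have mS1 := modeq_succ _ _ cS
      have vS1 : C.vert (p5 + S + 1) = f := (C.vert_congr mS1).trans hf6.symm
      have vT : C.vert (p5 + T) = d := (C.vert_congr cT).trans hd4v.symm
      have mT1 := modeq_succ _ _ cT
      have vT1 : C.vert (p5 + T + 1) = a := (C.vert_congr mT1).trans ha4.symm
      have hS3 : S ≠ 3 := by
        intro h; rw [h] at cS
        have := parmod _ _ cS
        omega
      have hS1n : S + 1 ≠ C.n := by
        intro h
        have h1 : (p5 + S + 1) % C.n = p5 % C.n := by
          rw [show p5 + S + 1 = p5 + C.n from by omega, Nat.add_mod_right]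
        have := parmod _ _ (h1.symm.trans mS1)
        omega
      have hT4 : T ≠ 4 := by
        intro h; rw [h] at cT
        have := parmod _ _ cT
        omega
      exact pattern2 f a b c d p5 S T (Ne.symm haf) (Ne.symm hbf) (Ne.symm hcf)
        (Ne.symm hdf) hab hac had hbc hbd hcd
        hSlt hTlt hS3 hS1n hT4 v0 v1 v2 v3 v4 vS vS1 vT vT1
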